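/- arXiv:1804.02802 — 7 statements merged into one kernel-verified Lean document; each statement's English description precedes it below -/
import Mathlib

section
/- Let G be a finite connected simple graph satisfying property (P3) with witness S. Then for every c ∈ S and x ∈ V(G) with d(c,x) ≥ 2, the set C(c,x) is nonempty. -/
open SimpleGraph

/-- The closed neighborhood `N[v]` of a vertex. -/
def cNbr {V : Type} (G : SimpleGraph V) (v : V) : Set V := insert v (G.neighborSet v)

/-- `N(c,x)`: the neighbors of `c` lying on a shortest path from `c` to `x`. -/
def stepSet {V : Type} (G : SimpleGraph V) (c x : V) : Set V :=
  {v | G.Adj c v ∧ G.dist c x = 1 + G.dist v x}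

/-- Property (P1): the four-point condition. -/
def P1 {V : Type} (G : SimpleGraph V) : Prop :=
  ∀ c c' x y : V,
    (G.dist c c' + G.dist x y ≤ G.dist c x + G.dist c' y ∧
      G.dist c x + G.dist c' y = G.dist c y + G.dist c' x) ∨
    (G.dist c x + G.dist c' y ≤ G.dist c c' + G.dist x y ∧
      G.dist c c' + G.dist x y = G.dist c y + G.dist c' x) ∨
    (G.dist c y + G.dist c' x ≤ G.dist c c' + G.dist x y ∧
      G.dist c c' + G.dist x y = G.dist c x + G.dist c' y)

/-- Property (P2). -/
def P2 {V : Type} (G : SimpleGraph V) : Prop :=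
  ∀ c x : V, 2 ≤ G.dist c x → ∀ c' ∈ stepSet G c x, ∀ y : V, 2 ≤ G.dist c' y →
    G.dist c y = G.dist c c' + G.dist c' y ∨ G.dist x y = G.dist x c' + G.dist c' y

/-- A (P3)-witness for `G`. -/
def P3Witness {V : Type} (G : SimpleGraph V) (S : Set V) : Prop :=
  (∀ v : V, v ∈ S ∨ ∃ s ∈ S, G.Adj v s) ∧
  ∀ c ∈ S, ∀ x : V, 2 ≤ G.dist c x →
    ∃ c' ∈ stepSet G c x ∩ S, ∀ y : V, 2 ≤ G.dist c' y →
      G.dist c y = G.dist c c' + G.dist c' y ∨ G.dist x y = G.dist x c' + G.dist c' y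

/-- Property (P3). -/
def P3 {V : Type} (G : SimpleGraph V) : Prop := ∃ S : Set V, P3Witness G S

/-- `C(c,x)` relative to a set `S`. -/
def CSet {V : Type} (G : SimpleGraph V) (S : Set V) (c x : V) : Set V :=
  {u | u ∈ stepSet G c x ∩ S ∧ ∀ v ∈ stepSet G c x, cNbr G v ⊆ cNbr G u}

/-- A cut vertex of a connected graph: its removal disconnects the graph. -/
def IsCutVertex {V : Type} (G : SimpleGraph V) (v : V) : Prop :=
  G.Connected ∧ ¬ (G.induce {u | u ≠ v}).Connected

/-- A set of vertices inducing a connected subgraph with no cut vertex of its own. -/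
def NoCutSet {V : Type} (G : SimpleGraph V) (B : Set V) : Prop :=
  (G.induce B).Connected ∧ ∀ v : B, ¬ IsCutVertex (G.induce B) v

/-- A block of `G`: a maximal connected subgraph having no cut vertex of its own. -/
def IsBlock {V : Type} (G : SimpleGraph V) (B : Set V) : Prop :=
  NoCutSet G B ∧ ∀ B' : Set V, B ⊆ B' → NoCutSet G B' → B = B'

/-- A block graph: a connected graph in which every block is complete. -/
def IsBlockGraph {V : Type} (G : SimpleGraph V) : Prop :=
  G.Connected ∧ ∀ B : Set V, IsBlock G B → ∀ u v, u ∈ B → v ∈ B → u ≠ v → G.Adj u v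

/-- The blow-up of a graph `H` by multiplicities `n`. -/
def blowup {W : Type} (H : SimpleGraph W) (n : W → ℕ) :
    SimpleGraph {p : W × ℕ // p.2 < n p.1} where
  Adj p q := p.val ≠ q.val ∧ (p.val.1 = q.val.1 ∨ H.Adj p.val.1 q.val.1)
  symm := by
    constructor
    rintro p q ⟨h1, h2 | h2⟩
    · exact ⟨fun h => h1 h.symm, Or.inl h2.symm⟩
    · exact ⟨fun h => h1 h.symm, Or.inr h2.symm⟩
  loopless := by constructor; rintro p ⟨h1, -⟩; exact h1 rfl

/-- An extended block graph: a graph isomorphic to the blow-up of the cut vertices of a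
finite block graph. -/
def IsExtendedBlockGraph {V : Type} (G : SimpleGraph V) : Prop :=
  ∃ (W : Type) (_ : Finite W) (H : SimpleGraph W) (n : W → ℕ),
    IsBlockGraph H ∧ (∀ v, 1 ≤ n v) ∧ (∀ v, ¬ IsCutVertex H v → n v = 1) ∧
    Nonempty (G ≃g blowup H n)

/-- `B` is a backbone of `G`. -/
def IsBackbone {V : Type} (G : SimpleGraph V) (B : Set V) : Prop :=
  IsExtendedBlockGraph (G.induce B) ∧
  ∀ c ∈ B, ∀ x : V, 2 ≤ G.dist c x →
    ∃ c' ∈ stepSet G c x ∩ B, ∀ v ∈ stepSet G c x, cNbr G v ⊆ cNbr G c'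

/-- A vertebrate graph: a connected graph with a backbone. -/
def IsVertebrateGraph {V : Type} (G : SimpleGraph V) : Prop :=
  G.Connected ∧ ∃ B : Set V, IsBackbone G B


/-!
Take for `C(c,x)` the vertex `c'` that the witness provides. If some `w ∈ N[v]` with
`v ∈ N(c,x)` lay outside `N[c']`, then `d(c',w) ≥ 2` and the witness splits a geodesic at `c'`:
either `d(c,w) = 1 + d(c',w) ≥ 3`, although `w` is within distance `2` of `c` through `v`, or
`d(x,w) = d(x,c') + d(c',w) ≥ d(c,x) + 1`, although `w` is within distance `d(v,x) + 1 = d(c,x)`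
of `x` through `v`.
-/

variable {V : Type} {G : SimpleGraph V}

lemma dist_le_one_of_mem_cNbr {v w : V} (h : w ∈ cNbr G v) : G.dist v w ≤ 1 := by
  rcases h with rfl | hadj
  · simp
  · exact (dist_eq_one_iff_adj.2 hadj).le

lemma SimpleGraph.Connected.two_le_dist_of_notMem_cNbr (hG : G.Connected) {v w : V}
    (h : w ∉ cNbr G v) : 2 ≤ G.dist v w :=
  hG.one_lt_dist_of_ne_of_not_adj (fun hvw => h (Or.inl hvw.symm)) (fun hadj => h (Or.inr hadj))

lemma dist_add_one_of_mem_stepSet {c x v : V} (hv : v ∈ stepSet G c x) :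
    G.dist v x + 1 = G.dist c x := by
  rw [hv.2, add_comm]

lemma SimpleGraph.Connected.cNbr_subset_of_mem_stepSet (hG : G.Connected) {c x c' v : V}
    (hc' : c' ∈ stepSet G c x)
    (hsplit : ∀ y : V, 2 ≤ G.dist c' y →
      G.dist c y = G.dist c c' + G.dist c' y ∨ G.dist x y = G.dist x c' + G.dist c' y)
    (hv : v ∈ stepSet G c x) : cNbr G v ⊆ cNbr G c' := by
  intro w hw
  by_contra hw'
  have hc'w : 2 ≤ G.dist c' w := hG.two_le_dist_of_notMem_cNbr hw'
  have hvw : G.dist v w ≤ 1 := dist_le_one_of_mem_cNbr hw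
  rcases hsplit w hc'w with hcw | hxw
  · have hcc' : G.dist c c' = 1 := dist_eq_one_iff_adj.2 hc'.1
    have hcv : G.dist c v = 1 := dist_eq_one_iff_adj.2 hv.1
    have hcw_le : G.dist c w ≤ G.dist c v + G.dist v w := hG.dist_triangle
    omega
  · have hxc' := dist_add_one_of_mem_stepSet hc'
    have hxv := dist_add_one_of_mem_stepSet hv
    have hxw_le : G.dist x w ≤ G.dist x v + G.dist v w := hG.dist_triangle
    rw [dist_comm] at hxc' hxv
    omega

theorem CSet_nonempty_general {V : Type} (G : SimpleGraph V)
    (hG : G.Connected) (S : Set V) (hS : P3Witness G S) :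
    ∀ c ∈ S, ∀ x : V, 2 ≤ G.dist c x → (CSet G S c x).Nonempty := by
  intro c hc x hcx
  obtain ⟨c', hc', hsplit⟩ := hS.2 c hc x hcx
  exact ⟨c', hc', fun v hv => hG.cNbr_subset_of_mem_stepSet hc'.1 hsplit hv⟩

/-- Under (P3) with witness `S`, the set `C(c,x)` is nonempty. -/
theorem CSet_nonempty {V : Type} [Fintype V] (G : SimpleGraph V)
    (hG : G.Connected) (S : Set V) (hS : P3Witness G S) :
    ∀ c ∈ S, ∀ x : V, 2 ≤ G.dist c x → (CSet G S c x).Nonempty :=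
  CSet_nonempty_general G hG S hS
end

section
/- Let G be a finite connected simple graph satisfying property (P2). Then for all vertices c, x with d(c,x) ≥ 2 and all c1, c2 ∈ N(c,x), we have N[c1] = N[c2]. -/
open SimpleGraph

/-!
Let `c₁, c₂ ∈ N(c,x)` and `y ∈ N[c₁]`. Then `d(c,y) ≤ 2` and `d(x,y) ≤ d(x,c₁) + 1 = d(x,c₂) + 1`,
so if `d(c₂,y) ≥ 2` neither alternative of (P2) for `c₂` and `y` can hold. Hence `y ∈ N[c₂]`.
-/

section

variable {V : Type} {G : SimpleGraph V}

lemma mem_cNbr_iff_dist_le_one (hG : G.Connected) {v y : V} :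
    y ∈ cNbr G v ↔ G.dist v y ≤ 1 := by
  rw [Nat.le_one_iff_eq_zero_or_eq_one, hG.dist_eq_zero_iff, dist_eq_one_iff_adj]
  exact ⟨Or.imp Eq.symm id, Or.imp Eq.symm id⟩

lemma dist_eq_of_mem_stepSet {c x c₁ c₂ : V} (h₁ : c₁ ∈ stepSet G c x)
    (h₂ : c₂ ∈ stepSet G c x) : G.dist x c₁ = G.dist x c₂ := by
  rw [G.dist_comm, G.dist_comm (u := x)]
  have := h₁.2
  have := h₂.2
  omega

lemma mem_cNbr_of_dist_le (hG : G.Connected) (hP2 : P2 G) {c x c' y : V}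
    (hcx : 2 ≤ G.dist c x) (hc' : c' ∈ stepSet G c x) (hcy : G.dist c y ≤ 2)
    (hxy : G.dist x y ≤ G.dist x c' + 1) : y ∈ cNbr G c' := by
  rw [mem_cNbr_iff_dist_le_one hG]
  by_contra! hc'y
  have hcc' : G.dist c c' = 1 := dist_eq_one_iff_adj.mpr hc'.1
  rcases hP2 c x hcx c' hc' y hc'y with h | h <;> omega

lemma cNbr_subset_of_mem_stepSet (hG : G.Connected) (hP2 : P2 G) {c x c₁ c₂ : V}
    (hcx : 2 ≤ G.dist c x) (h₁ : c₁ ∈ stepSet G c x) (h₂ : c₂ ∈ stepSet G c x) :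
    cNbr G c₁ ⊆ cNbr G c₂ := by
  intro y hy
  have hc₁y := (mem_cNbr_iff_dist_le_one hG).mp hy
  have hcc₁ : G.dist c c₁ = 1 := dist_eq_one_iff_adj.mpr h₁.1
  refine mem_cNbr_of_dist_le hG hP2 hcx h₂ ?_ ?_
  · calc G.dist c y ≤ G.dist c c₁ + G.dist c₁ y := hG.dist_triangle
      _ ≤ 2 := by omega
  · calc G.dist x y ≤ G.dist x c₁ + G.dist c₁ y := hG.dist_triangle
      _ ≤ G.dist x c₂ + 1 := by rw [dist_eq_of_mem_stepSet h₁ h₂]; omega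

end

theorem cNbr_eq_of_mem_stepSet_general {V : Type} (G : SimpleGraph V)
    (hG : G.Connected) (hP2 : P2 G) :
    ∀ c x : V, 2 ≤ G.dist c x →
      ∀ c1 ∈ stepSet G c x, ∀ c2 ∈ stepSet G c x, cNbr G c1 = cNbr G c2 :=
  fun _ _ hcx _ h₁ _ h₂ => (cNbr_subset_of_mem_stepSet hG hP2 hcx h₁ h₂).antisymm
    (cNbr_subset_of_mem_stepSet hG hP2 hcx h₂ h₁)

/-- Under (P2), any two members of `N(c,x)` have the same closed
neighborhood. -/
theorem cNbr_eq_of_mem_stepSet {V : Type} [Fintype V] (G : SimpleGraph V)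
    (hG : G.Connected) (hP2 : P2 G) :
    ∀ c x : V, 2 ≤ G.dist c x →
      ∀ c1 ∈ stepSet G c x, ∀ c2 ∈ stepSet G c x, cNbr G c1 = cNbr G c2 :=
  cNbr_eq_of_mem_stepSet_general G hG hP2
end

section
/- Let G be a finite connected simple graph satisfying property (P3) with witness S. Let c1, c2 ∈ V(G) with c2 ∈ S and N[c1] ⊆ N[c2]. If c1 ∈ C(c,x) for some c ∈ S and x ∈ V(G) with d(c,x) ≥ 2, then c2 ∈ C(c,x). -/
open SimpleGraph

/-!
If `N[u] ⊆ N[v]`, then `v` is at least as close as `u` to every vertex `x` at positive distance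
from `u`: the first step of a shortest `u`–`x` path lands in `N[v]`. For `c1 ∈ N(c,x)` this puts
`c2` no farther from `x` than `c1`, hence `c2 ≠ c`, and `c ∈ N[c1] ⊆ N[c2]` makes `c2` a
neighbour of `c` on a shortest path to `x`.
-/

namespace SimpleGraph

variable {V : Type} {G : SimpleGraph V}

lemma exists_adj_dist_eq_add_one {u x : V} (h : G.dist u x ≠ 0) :
    ∃ w, G.Adj u w ∧ G.dist u x = G.dist w x + 1 := by
  obtain ⟨p, hp⟩ := exists_walk_of_dist_ne_zero h
  cases p with
  | nil => simp at h
  | cons huw q =>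
    rename_i w
    refine ⟨w, huw, le_antisymm ?_ ?_⟩
    · calc G.dist u x ≤ G.dist u w + G.dist w x := huw.reachable.dist_triangle_left x
        _ = G.dist w x + 1 := by rw [dist_eq_one_iff_adj.mpr huw, add_comm]
    · calc G.dist w x + 1 ≤ q.length + 1 := by gcongr; exact dist_le q
        _ = G.dist u x := by simpa using hp

lemma dist_le_of_cNbr_subset {u v x : V} (hux : G.dist u x ≠ 0) (h : cNbr G u ⊆ cNbr G v) :
    G.dist v x ≤ G.dist u x := by
  obtain ⟨w, huw, hw⟩ := exists_adj_dist_eq_add_one hux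
  rcases h (Or.inr huw) with rfl | hvw
  · omega
  · calc G.dist v x ≤ G.dist v w + G.dist w x := hvw.reachable.dist_triangle_left x
      _ = G.dist u x := by rw [dist_eq_one_iff_adj.mpr hvw, hw, add_comm]

lemma mem_stepSet_of_cNbr_subset {c u v x : V} (hcx : 2 ≤ G.dist c x)
    (hu : u ∈ stepSet G c x) (h : cNbr G u ⊆ cNbr G v) : v ∈ stepSet G c x := by
  obtain ⟨hcu, hd⟩ := hu
  have hvx : G.dist v x ≤ G.dist u x := dist_le_of_cNbr_subset (by omega) h
  rcases h (Or.inr hcu.symm) with rfl | hvc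
  · omega
  · have hcv := hvc.symm
    have htri : G.dist c x ≤ G.dist c v + G.dist v x := hcv.reachable.dist_triangle_left x
    rw [dist_eq_one_iff_adj.mpr hcv] at htri
    exact ⟨hcv, by omega⟩

end SimpleGraph

theorem mem_CSet_of_cNbr_subset_general {V : Type} (G : SimpleGraph V)
    (S : Set V)
    (c1 c2 : V) (hc2 : c2 ∈ S) (h12 : cNbr G c1 ⊆ cNbr G c2)
    (c : V) (x : V) (hcx : 2 ≤ G.dist c x)
    (h1 : c1 ∈ CSet G S c x) : c2 ∈ CSet G S c x := by
  obtain ⟨⟨hstep, -⟩, hdom⟩ := h1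
  exact ⟨⟨mem_stepSet_of_cNbr_subset hcx hstep h12, hc2⟩, fun v hv => (hdom v hv).trans h12⟩

/-- Under (P3) with witness `S`, if `N[c1] ⊆ N[c2]`, `c2 ∈ S` and
`c1 ∈ C(c,x)`, then `c2 ∈ C(c,x)`. -/
theorem mem_CSet_of_cNbr_subset {V : Type} [Fintype V] (G : SimpleGraph V)
    (hG : G.Connected) (S : Set V) (hS : P3Witness G S)
    (c1 c2 : V) (hc2 : c2 ∈ S) (h12 : cNbr G c1 ⊆ cNbr G c2)
    (c : V) (hc : c ∈ S) (x : V) (hcx : 2 ≤ G.dist c x)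
    (h1 : c1 ∈ CSet G S c x) : c2 ∈ CSet G S c x :=
  mem_CSet_of_cNbr_subset_general G S c1 c2 hc2 h12 c x hcx h1
end

section
/- Let G be a finite connected simple graph satisfying property (P3) with witness S. For any c1, c2 ∈ S and x1, x2 ∈ V(G) with d(c1,x1) ≥ 2 and d(c2,x2) ≥ 2, the sets C(c1,x1) and C(c2,x2) are either identical or disjoint. -/
open SimpleGraph

/-!
Every member `u` of `C(c,x)` has the largest closed neighbourhood among `N(c,x)`, so any two
members of `C(c,x)` are twins: `N[u] = N[u']`. Twins are equidistant from every third vertex,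
hence `C(c,x)` contains, together with any member, every twin of it lying in `S`. Thus a common
member `u` of `C(c1,x1)` and `C(c2,x2)` makes both sets equal to the twins of `u` in `S`.
-/

namespace SimpleGraph

variable {V : Type} {G : SimpleGraph V}

lemma dist_le_one_of_mem_cNbr {u v : V} (hv : v ∈ cNbr G u) : G.dist u v ≤ 1 := by
  rcases hv with rfl | hv
  · simp
  · exact (dist_eq_one_iff_adj.2 hv).le

lemma Connected.dist_le_of_neighborSet_subset_cNbr (hG : G.Connected) {u u' y : V}
    (h : G.neighborSet u' ⊆ cNbr G u) (hy : y ≠ u') : G.dist u y ≤ G.dist u' y := by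
  obtain ⟨p, hp⟩ := (hG u' y).exists_walk_length_eq_dist
  cases p with
  | nil => exact absurd rfl hy
  | @cons _ w _ hw q =>
    calc G.dist u y ≤ G.dist u w + G.dist w y := hG.dist_triangle
      _ ≤ 1 + q.length := add_le_add (dist_le_one_of_mem_cNbr (h hw)) (dist_le q)
      _ = G.dist u' y := by rw [← hp, Walk.length_cons, add_comm]

lemma Connected.dist_eq_of_cNbr_eq (hG : G.Connected) {u u' y : V}
    (h : cNbr G u = cNbr G u') (hu : y ≠ u) (hu' : y ≠ u') : G.dist u y = G.dist u' y :=
  le_antisymm (hG.dist_le_of_neighborSet_subset_cNbr (h ▸ Set.subset_insert _ _) hu')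
    (hG.dist_le_of_neighborSet_subset_cNbr (h ▸ Set.subset_insert _ _) hu)

lemma cNbr_eq_of_mem_CSet {S : Set V} {c x u u' : V} (hu : u ∈ CSet G S c x)
    (hu' : u' ∈ CSet G S c x) : cNbr G u = cNbr G u' :=
  (hu'.2 u hu.1.1).antisymm (hu.2 u' hu'.1.1)

lemma Connected.mem_CSet_of_cNbr_eq (hG : G.Connected) {S : Set V} {c x u u' : V}
    (hcx : 2 ≤ G.dist c x) (hu : u ∈ CSet G S c x) (hu'S : u' ∈ S)
    (h : cNbr G u = cNbr G u') : u' ∈ CSet G S c x := by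
  obtain ⟨⟨⟨hcu, hdist⟩, -⟩, hdom⟩ := hu
  have hc : c ∈ cNbr G u' := h ▸ Set.mem_insert_of_mem _ hcu.symm
  have hxu : x ≠ u := by
    rintro rfl
    rw [dist_self] at hdist
    omega
  have hxu' : x ≠ u' := by
    rintro rfl
    have := dist_le_one_of_mem_cNbr hc
    rw [dist_comm] at this
    omega
  have hdist' := hG.dist_eq_of_cNbr_eq h hxu hxu'
  have hcu' : G.Adj c u' := by
    rcases hc with rfl | hadj
    · omega
    · exact hadj.symm
  exact ⟨⟨⟨hcu', hdist'.symm ▸ hdist⟩, hu'S⟩, fun v hv => h ▸ hdom v hv⟩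

end SimpleGraph

theorem CSet_eq_or_disjoint_general {V : Type} (G : SimpleGraph V)
    (hG : G.Connected) (S : Set V)
    (c1 c2 : V) (x1 x2 : V)
    (h1 : 2 ≤ G.dist c1 x1) (h2 : 2 ≤ G.dist c2 x2) :
    CSet G S c1 x1 = CSet G S c2 x2 ∨ Disjoint (CSet G S c1 x1) (CSet G S c2 x2) := by
  refine or_iff_not_imp_right.2 fun hnd => ?_
  obtain ⟨u, hu1, hu2⟩ := Set.not_disjoint_iff.1 hnd
  ext w
  exact ⟨fun hw => hG.mem_CSet_of_cNbr_eq h2 hu2 hw.1.2 (cNbr_eq_of_mem_CSet hu1 hw),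
    fun hw => hG.mem_CSet_of_cNbr_eq h1 hu1 hw.1.2 (cNbr_eq_of_mem_CSet hu2 hw)⟩

/-- Under (P3) with witness `S`, the sets `C(c1,x1)` and `C(c2,x2)` are
either identical or disjoint. -/
theorem CSet_eq_or_disjoint {V : Type} [Fintype V] (G : SimpleGraph V)
    (hG : G.Connected) (S : Set V) (hS : P3Witness G S)
    (c1 c2 : V) (hc1 : c1 ∈ S) (hc2 : c2 ∈ S) (x1 x2 : V)
    (h1 : 2 ≤ G.dist c1 x1) (h2 : 2 ≤ G.dist c2 x2) :
    CSet G S c1 x1 = CSet G S c2 x2 ∨ Disjoint (CSet G S c1 x1) (CSet G S c2 x2) :=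
  CSet_eq_or_disjoint_general G hG S c1 c2 x1 x2 h1 h2
end

section
/- Let G be a vertebrate graph with backbone B. Then for all vertices u, v ∈ V(G) with d(u,v) ≥ 2, there exists a shortest path in G from u to v all of whose internal vertices lie in B. -/
open SimpleGraph

/-!
From a backbone vertex, the backbone condition always offers a next vertex of a shortest path
inside `B`, so shortest paths starting in `B` can be kept in `B` up to their last vertex. It
remains to find, for `d(u,v) ≥ 2`, a first step `w ∈ N(u,v) ∩ B`. Every vertex is in `B` or
adjacent to some `b ∈ B`; given a first step `w₁`, either `b` or its dominator towards `w₁` is a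
backbone vertex `p` adjacent to both `u` and `w₁`, and if `p` is not itself a first step, its
dominator towards `v` is.
-/

namespace SimpleGraph

variable {V : Type} {G : SimpleGraph V}

lemma Adj.dist_le_one_add_dist {a b : V} (h : G.Adj a b) (x : V) :
    G.dist a x ≤ 1 + G.dist b x := by
  simpa [dist_eq_one_iff_adj.mpr h] using h.reachable.dist_triangle_left x

lemma Reachable.exists_mem_stepSet {u v : V} (h : G.Reachable u v) (hne : u ≠ v) :
    ∃ w, w ∈ stepSet G u v := by
  obtain ⟨p, hp⟩ := h.exists_walk_length_eq_dist
  cases p with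
  | nil => exact absurd rfl hne
  | cons hadj q =>
    have hq := dist_le q
    have := hadj.dist_le_one_add_dist v
    exact ⟨_, hadj, by rw [Walk.length_cons] at hp; omega⟩

end SimpleGraph

section Backbone

variable {V : Type} {G : SimpleGraph V} {B : Set V}

lemma IsBackbone.nonempty (hB : IsBackbone G B) : B.Nonempty := by
  obtain ⟨W, -, H, n, hH, hn, -, ⟨e⟩⟩ := hB.1
  obtain ⟨w⟩ := hH.1.nonempty
  exact ⟨_, (e.symm ⟨(w, 0), hn w⟩).2⟩

lemma IsBackbone.exists_mem_stepSet_of_mem (hB : IsBackbone G B) {u v : V} (hu : u ∈ B)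
    (huv : 2 ≤ G.dist u v) : ∃ w ∈ stepSet G u v, w ∈ B :=
  let ⟨w, ⟨hw, hwB⟩, _⟩ := hB.2 u hu v huv
  ⟨w, hw, hwB⟩

lemma IsBackbone.exists_shortest_walk_of_mem (hB : IsBackbone G B) {c x : V} (hc : c ∈ B)
    (hcx : G.Reachable c x) :
    ∃ p : G.Walk c x, p.length = G.dist c x ∧ ∀ w ∈ p.support, w ∈ B ∨ w = x := by
  induction hd : G.dist c x generalizing c with
  | zero =>
    obtain rfl := hcx.dist_eq_zero_iff.mp hd
    exact ⟨.nil, rfl, by simp [hc]⟩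
  | succ n ih =>
    rcases Nat.eq_zero_or_pos n with rfl | hn
    · have hadj := dist_eq_one_iff_adj.mp hd
      refine ⟨hadj.toWalk, hadj.length_toWalk, ?_⟩
      simp [hadj.support_toWalk, hc]
    · obtain ⟨c', ⟨hadj, hstep⟩, hc'⟩ := hB.exists_mem_stepSet_of_mem (v := x) hc (by omega)
      obtain ⟨q, hq, hqB⟩ := ih hc' (hadj.reachable.symm.trans hcx) (by omega)
      refine ⟨.cons hadj q, by simp [hq], ?_⟩
      simpa [hc] using hqB

lemma IsBackbone.mem_or_exists_adj_mem (hB : IsBackbone G B) (hG : G.Connected) (u : V) :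
    u ∈ B ∨ ∃ b ∈ B, G.Adj b u := by
  obtain ⟨b, hb⟩ := hB.nonempty
  obtain ⟨p, -, hpB⟩ := hB.exists_shortest_walk_of_mem hb (hG b u)
  by_cases hp : p.Nil
  · exact .inl (hp.eq ▸ hb)
  · have hadj := p.adj_penultimate hp
    exact .inr ⟨_, (hpB _ (p.getVert_mem_support (p.length - 1))).resolve_right hadj.ne, hadj⟩

lemma IsBackbone.exists_mem_stepSet_of_adj_of_adj (hB : IsBackbone G B) {u v p w : V}
    (hp : p ∈ B) (hpu : G.Adj p u) (hpw : G.Adj p w) (hw : w ∈ stepSet G u v)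
    (huv : 2 ≤ G.dist u v) : ∃ q ∈ stepSet G u v, q ∈ B := by
  have h₁ := hpw.dist_le_one_add_dist v
  have h₂ := hpu.symm.dist_le_one_add_dist v
  have hwv := hw.2
  by_cases hpv : G.dist u v = 1 + G.dist p v
  · exact ⟨p, ⟨hpu.symm, hpv⟩, hp⟩
  -- `p` is as far from `v` as `u`, so `w` is a first step from `p` too, and its dominator
  -- towards `v` is adjacent to `u`.
  obtain ⟨q, ⟨⟨-, hqv⟩, hq⟩, hdom⟩ := hB.2 p hp v (by omega)
  have hu : u ∈ cNbr G q := hdom w ⟨hpw, by omega⟩ (Set.mem_insert_of_mem _ hw.1.symm)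
  rcases Set.mem_insert_iff.mp hu with rfl | hqu
  · omega
  · exact ⟨q, ⟨hqu.symm, by omega⟩, hq⟩

lemma IsBackbone.exists_mem_stepSet (hB : IsBackbone G B) (hG : G.Connected) {u v : V}
    (huv : 2 ≤ G.dist u v) : ∃ w ∈ stepSet G u v, w ∈ B := by
  rcases hB.mem_or_exists_adj_mem hG u with hu | ⟨b, hb, hbu⟩
  · exact hB.exists_mem_stepSet_of_mem hu huv
  obtain ⟨w, hw⟩ := (hG u v).exists_mem_stepSet (by rintro rfl; simp at huv)
  by_cases hbw : b = w
  · exact ⟨w, hw, hbw ▸ hb⟩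
  by_cases hbw' : G.Adj b w
  · exact hB.exists_mem_stepSet_of_adj_of_adj hb hbu hbw' hw huv
  have hd : G.dist b w = 2 := by
    have := (hG b w).one_lt_dist_of_ne_of_not_adj hbw hbw'
    have := hbu.dist_le_one_add_dist w
    have := dist_eq_one_iff_adj.mpr hw.1
    omega
  obtain ⟨p, ⟨⟨-, hpw⟩, hp⟩, hdom⟩ := hB.2 b hb w (by omega)
  have hu : u ∈ cNbr G p :=
    hdom u ⟨hbu, by rw [hd, dist_eq_one_iff_adj.mpr hw.1]⟩ (Set.mem_insert _ _)
  rcases Set.mem_insert_iff.mp hu with rfl | hpu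
  · exact hB.exists_mem_stepSet_of_mem hp huv
  · exact hB.exists_mem_stepSet_of_adj_of_adj hp hpu
      (dist_eq_one_iff_adj.mp (by omega)) hw huv

end Backbone

theorem exists_shortest_path_internal_in_backbone_general {V : Type}
    (G : SimpleGraph V) (hG : G.Connected) (B : Set V) (hB : IsBackbone G B) :
    ∀ u v : V, 2 ≤ G.dist u v →
      ∃ p : G.Walk u v, p.length = G.dist u v ∧
        ∀ w ∈ p.support, w = u ∨ w = v ∨ w ∈ B := by
  intro u v huv
  obtain ⟨w, ⟨hw, hwv⟩, hwB⟩ := hB.exists_mem_stepSet hG huv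
  obtain ⟨q, hq, hqB⟩ := hB.exists_shortest_walk_of_mem hwB (hG w v)
  refine ⟨.cons hw q, by rw [Walk.length_cons, hq, hwv, add_comm], ?_⟩
  simp only [Walk.support_cons, List.mem_cons, forall_eq_or_imp, true_or, true_and]
  exact fun z hz => (hqB z hz).elim (.inr ∘ .inr) (.inr ∘ .inl)

/-- In a vertebrate graph with backbone `B`, any two vertices at distance
at least 2 are joined by a shortest path all of whose internal vertices lie in `B`. -/
theorem exists_shortest_path_internal_in_backbone {V : Type} [Fintype V]
    (G : SimpleGraph V) (hG : G.Connected) (B : Set V) (hB : IsBackbone G B) :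
    ∀ u v : V, 2 ≤ G.dist u v →
      ∃ p : G.Walk u v, p.length = G.dist u v ∧
        ∀ w ∈ p.support, w = u ∨ w = v ∨ w ∈ B :=
  exists_shortest_path_internal_in_backbone_general G hG B hB
end

section
/- Let G be a finite connected simple graph satisfying property (P2), let D ≥ 2 be the diameter of G, and let u be a vertex of G having some vertex at distance D from it. Let C be the vertex set of a connected component of the subgraph of G induced by N_D(u) = {v ∈ V(G) : d(u,v) = D}, and let N(C) = {v ∈ V(G) : d(u,v) = D − 1 and v is adjacent to some vertex of C}. Then every two distinct vertices of C ∪ N(C) are adjacent in G, i.e., C ∪ N(C) induces a complete subgraph. -/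
open SimpleGraph

/-!
Let `z` be a vertex at maximal distance `D ≥ 2` from `u`. If two neighbours `a, b` of `z` were
non-adjacent, then `d(a,b) = 2` and `z ∈ N(a,b)`, so (P2) with `y = u` would put `a` or `b` at
distance `D + 1` from `u`. Hence every far vertex has a complete neighbourhood. This makes each
component of the far layer a clique, and a clique whose members all have complete
neighbourhoods stays a clique after adding all of its neighbours.
-/

namespace SimpleGraph

variable {V : Type} {G : SimpleGraph V}

lemma dist_eq_two_of_mem_commonNeighbors {a b z : V} (hz : z ∈ G.commonNeighbors a b)
    (hab : a ≠ b) (hnadj : ¬G.Adj a b) : G.dist a b = 2 := by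
  rw [dist, edist_eq_two_iff.mpr ⟨hab, hnadj, z, hz⟩]
  rfl

lemma Walk.eq_or_adj_of_isClique_neighborSet (hG : ∀ v, G.IsClique (G.neighborSet v))
    {x y : V} (p : G.Walk x y) : x = y ∨ G.Adj x y := by
  induction p with
  | nil => exact .inl rfl
  | @cons x m y hxm _ ih =>
    rcases ih with rfl | hmy
    · exact .inr hxm
    · by_cases hxy : x = y
      · exact .inl hxy
      · exact .inr (hG m hxm.symm hmy hxy)

lemma isClique_image_supp_of_isClique_neighborSet {F : Set V}
    (hF : ∀ z ∈ F, G.IsClique (G.neighborSet z)) (c : (G.induce F).ConnectedComponent) :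
    G.IsClique (Subtype.val '' c.supp) := by
  have hind : ∀ z : F, (G.induce F).IsClique ((G.induce F).neighborSet z) :=
    fun z a ha b hb hab => hF z z.2 ha hb (Subtype.val_injective.ne hab)
  rintro _ ⟨x, hx, rfl⟩ _ ⟨y, hy, rfl⟩ hxy
  rw [ConnectedComponent.mem_supp_iff] at hx hy
  obtain ⟨p⟩ := ConnectedComponent.exact (hx.trans hy.symm)
  exact (p.eq_or_adj_of_isClique_neighborSet hind).resolve_left (ne_of_apply_ne _ hxy)

lemma IsClique.union_neighbors {K : Set V} (hK : G.IsClique K)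
    (hloc : ∀ w ∈ K, G.IsClique (G.neighborSet w)) :
    G.IsClique (K ∪ {v | ∃ w ∈ K, G.Adj v w}) := by
  have hnear : ∀ x ∈ K ∪ {v | ∃ w ∈ K, G.Adj v w}, ∀ w ∈ K, x = w ∨ G.Adj x w := by
    rintro x (hx | ⟨w', hw', hxw'⟩) w hw
    · exact or_iff_not_imp_left.mpr (hK hx hw)
    · by_cases hxw : x = w
      · exact .inl hxw
      · by_cases hww' : w' = w
        · exact .inr (hww' ▸ hxw')
        · exact .inr (hloc w' hw' hxw'.symm (hK hw' hw hww') hxw)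
  rintro a ha b hb hab
  rcases ha with ha | ⟨w, hw, haw⟩
  · exact ((hnear b hb a ha).resolve_left (Ne.symm hab)).symm
  · rcases hnear b hb w hw with rfl | hbw
    · exact haw
    · exact hloc w hw haw.symm hbw.symm hab

end SimpleGraph

lemma P2.isClique_neighborSet_of_farthest {V : Type} {G : SimpleGraph V} (hP2 : P2 G)
    {u z : V} (hz : 2 ≤ G.dist u z) (hfar : ∀ v, G.dist u v ≤ G.dist u z) : G.IsClique (G.neighborSet z) := by
  intro a (hza : G.Adj z a) b (hzb : G.Adj z b) hab
  by_contra hnadj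
  have hab2 : G.dist a b = 2 :=
    dist_eq_two_of_mem_commonNeighbors (G.mem_commonNeighbors.mpr ⟨hza.symm, hzb.symm⟩) hab hnadj
  have hstep : z ∈ stepSet G a b := ⟨hza.symm, by rw [hab2, dist_eq_one_iff_adj.mpr hzb]⟩
  have hzu : 2 ≤ G.dist z u := dist_comm (G := G) ▸ hz
  rcases hP2 a b hab2.ge z hstep u hzu with h | h
  · have := hfar a
    rw [dist_comm, dist_comm (u := z), dist_eq_one_iff_adj.mpr hza.symm] at h
    omega
  · have := hfar b
    rw [dist_comm, dist_comm (u := z), dist_eq_one_iff_adj.mpr hzb.symm] at h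
    omega

theorem comp_union_nbrs_complete_general {V : Type} (G : SimpleGraph V)
    (hP2 : P2 G) (D : ℕ) (hD : 2 ≤ D)
    (hdle : ∀ v w : V, G.dist v w ≤ D) (u : V)
    (C : Set V)
    (hC : ∃ w : {v : V // G.dist u v = D},
      C = Subtype.val ''
        ((G.induce {v : V | G.dist u v = D}).connectedComponentMk ⟨w.val, w.property⟩).supp) :
    ∀ a ∈ C ∪ {v : V | G.dist u v = D - 1 ∧ ∃ w ∈ C, G.Adj v w},
      ∀ b ∈ C ∪ {v : V | G.dist u v = D - 1 ∧ ∃ w ∈ C, G.Adj v w},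
        a ≠ b → G.Adj a b := by
  obtain ⟨w, rfl⟩ := hC
  have hfar : ∀ z ∈ {v : V | G.dist u v = D}, G.IsClique (G.neighborSet z) :=
    fun z (hz : G.dist u z = D) =>
      hP2.isClique_neighborSet_of_farthest (hz ▸ hD) fun v => hz ▸ hdle u v
  have hCclique := isClique_image_supp_of_isClique_neighborSet hfar
    ((G.induce _).connectedComponentMk ⟨w.val, w.property⟩)
  have hCneighbors := hCclique.union_neighbors (Set.forall_mem_image.mpr fun z _ => hfar z z.2)
  exact hCneighbors.subset (Set.union_subset_union_right _ fun v hv => hv.2)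

/-- Under (P2), if `C` is a component of the subgraph induced by the
vertices at maximal distance `D ≥ 2` from `u`, then `C ∪ N(C)` induces a complete
subgraph. -/
theorem comp_union_nbrs_complete {V : Type} [Fintype V] (G : SimpleGraph V)
    (hG : G.Connected) (hP2 : P2 G) (D : ℕ) (hD : 2 ≤ D)
    (hdle : ∀ v w : V, G.dist v w ≤ D) (u : V) (hu : ∃ w : V, G.dist u w = D)
    (C : Set V)
    (hC : ∃ w : {v : V // G.dist u v = D},
      C = Subtype.val ''
        ((G.induce {v : V | G.dist u v = D}).connectedComponentMk ⟨w.val, w.property⟩).supp) :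
    ∀ a ∈ C ∪ {v : V | G.dist u v = D - 1 ∧ ∃ w ∈ C, G.Adj v w},
      ∀ b ∈ C ∪ {v : V | G.dist u v = D - 1 ∧ ∃ w ∈ C, G.Adj v w},
        a ≠ b → G.Adj a b :=
  comp_union_nbrs_complete_general G hP2 D hD hdle u C hC
end

section
/- Let G be a finite connected simple graph and H a connected induced subgraph of G that is isometric in G. Suppose H (with its own graph distance, which agrees with that of G on V(H)) satisfies property (P3) with witness S ⊆ V(H). For c ∈ V(H) and r ∈ V(G) define f(c,r) = min over x ∈ V(H) of (d_G(r,x) − d_G(c,x)). Then for every c ∈ S and r ∈ V(G) with f(c,r) < 0, and every r' ∈ V(G) with r' = r or r' adjacent to r in G, at least one of the following holds: (i) r' ∈ N_G[c]; or (ii) there exists c' ∈ S with c' = c or c' adjacent to c in G, such that f(c',r') ≥ f(c,r). -/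
/-!
If the robber's move does not lower `f(c, ·)`, the cop stays put. Otherwise pick `x ∈ B`
attaining the new minimum `f(c, r')`; then `d(c, x) ≥ 2`, and the cop steps to the vertex `c'`
that (P3) provides on a geodesic from `c` to `x`. For `y ∈ B` at distance `≥ 2` from `c'`,
either `c'` lies on a geodesic from `c` to `y`, and the cop's step compensates the robber's,
or `c'` lies on a geodesic from `x` to `y`, and then `d(r', y) - d(c', y) ≥ -f(c, r) > 0`.
The remaining `y`, within distance `1` of `c'`, contribute at least `-1 ≥ f(c, r)`.
-/

open SimpleGraph

namespace SimpleGraph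

variable {V : Type}

def potentialValues (G : SimpleGraph V) (B : Set V) (c r : V) : Set ℤ :=
  {z : ℤ | ∃ x ∈ B, z = (G.dist r x : ℤ) - (G.dist c x : ℤ)}

/-- The paper's `f(c, r)`, for the subgraph induced on `B`. -/
noncomputable def potential (G : SimpleGraph V) (B : Set V) (c r : V) : ℤ :=
  sInf (G.potentialValues B c r)

variable {G : SimpleGraph V} {B : Set V} {c c' r r' x : V}

lemma bddBelow_potentialValues (hG : G.Connected) : BddBelow (G.potentialValues B c r) := by
  refine ⟨-(G.dist c r : ℤ), ?_⟩
  rintro _ ⟨x, -, rfl⟩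
  have : G.dist c x ≤ G.dist c r + G.dist r x := hG.dist_triangle
  omega

lemma potential_le (hG : G.Connected) {y : V} (hy : y ∈ B) :
    G.potential B c r ≤ (G.dist r y : ℤ) - (G.dist c y : ℤ) :=
  csInf_le (bddBelow_potentialValues hG) ⟨y, hy, rfl⟩

lemma exists_eq_potential (hG : G.Connected) (hB : B.Nonempty) :
    ∃ x ∈ B, G.potential B c r = (G.dist r x : ℤ) - (G.dist c x : ℤ) := by
  obtain ⟨x, hx⟩ := hB
  exact Int.csInf_mem (s := G.potentialValues B c r) ⟨_, x, hx, rfl⟩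
    (bddBelow_potentialValues hG)

lemma le_potential {z : ℤ} (hB : B.Nonempty)
    (h : ∀ y ∈ B, z ≤ (G.dist r y : ℤ) - (G.dist c y : ℤ)) : z ≤ G.potential B c r := by
  obtain ⟨x, hx⟩ := hB
  refine le_csInf ⟨_, x, hx, rfl⟩ ?_
  rintro _ ⟨y, hy, rfl⟩
  exact h y hy

lemma dist_le_dist_add_one_of_eq_or_adj (hr : r' = r ∨ G.Adj r r') (y : V) :
    G.dist r y ≤ G.dist r' y + 1 := by
  rcases hr with rfl | hadj
  · omega
  · have := hadj.reachable.dist_triangle_left y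
    rw [dist_eq_one_iff_adj.mpr hadj] at this
    omega

lemma potential_le_potential_of_step (hG : G.Connected) (hx : x ∈ B) (hadj : G.Adj c c')
    (hstep : G.dist c x = 1 + G.dist c' x)
    (hsplit : ∀ y ∈ B, 2 ≤ G.dist c' y →
      G.dist c y = G.dist c c' + G.dist c' y ∨ G.dist x y = G.dist x c' + G.dist c' y)
    (hr : r' = r ∨ G.Adj r r') (hneg : G.potential B c r < 0)
    (hdrop : (G.dist r' x : ℤ) - (G.dist c x : ℤ) < G.potential B c r) :
    G.potential B c r ≤ G.potential B c' r' := by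
  refine le_potential ⟨x, hx⟩ fun y hy => ?_
  have hrobber := dist_le_dist_add_one_of_eq_or_adj hr y
  by_cases hfar : 2 ≤ G.dist c' y
  · rcases hsplit y hy hfar with hcy | hxy
    · have hcc' : G.dist c c' = 1 := dist_eq_one_iff_adj.mpr hadj
      have := potential_le hG hy (c := c) (r := r)
      omega
    · have : G.dist x y ≤ G.dist x r' + G.dist r' y := hG.dist_triangle
      rw [dist_comm (u := x) (v := r')] at this
      rw [dist_comm (u := x) (v := c')] at hxy
      omega
  · omega

lemma exists_step_of_p3Witness (hiso : ∀ u v : B, (G.induce B).dist u v = G.dist u.val v.val)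
    {S : Set B} (hS : P3Witness (G.induce B) S) {c x : B} (hc : c ∈ S)
    (hcx : 2 ≤ G.dist c.val x.val) :
    ∃ c' ∈ S, G.Adj c.val c'.val ∧ G.dist c.val x.val = 1 + G.dist c'.val x.val ∧
      ∀ y ∈ B, 2 ≤ G.dist c'.val y →
        G.dist c.val y = G.dist c.val c'.val + G.dist c'.val y ∨
        G.dist x.val y = G.dist x.val c'.val + G.dist c'.val y := by
  obtain ⟨c', ⟨⟨hadj, hstep⟩, hc'⟩, hsplit⟩ := hS.2 c hc x (by rwa [hiso])
  refine ⟨c', hc', hadj, by rwa [hiso, hiso] at hstep, fun y hy hfar => ?_⟩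
  simpa only [hiso] using hsplit ⟨y, hy⟩ (by rwa [hiso])

end SimpleGraph

theorem cop_maintains_potential_general {V : Type} (G : SimpleGraph V)
    (hG : G.Connected) (B : Set V)
    (hiso : ∀ u v : B, (G.induce B).dist u v = G.dist u.val v.val)
    (S : Set ↥B) (hS : P3Witness (G.induce B) S)
    (f : ↥B → V → ℤ)
    (hf : ∀ (c : ↥B) (r : V),
      f c r = sInf {z : ℤ | ∃ x ∈ B, z = (G.dist r x : ℤ) - (G.dist c.val x : ℤ)}) :
    ∀ c ∈ S, ∀ r : V, f c r < 0 → ∀ r' : V, (r' = r ∨ G.Adj r r') →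
      r' ∈ cNbr G c.val ∨
      ∃ c' ∈ S, (c'.val = c.val ∨ G.Adj c.val c'.val) ∧ f c r ≤ f c' r' := by
  intro c hc r hneg r' hr'
  have hpot : ∀ c r, f c r = G.potential B c.val r := hf
  simp only [hpot] at hneg ⊢
  right
  by_cases hstay : G.potential B c r ≤ G.potential B c r'
  · exact ⟨c, hc, Or.inl rfl, hstay⟩
  obtain ⟨x, hx, hxmin⟩ := exists_eq_potential hG ⟨c, c.2⟩ (c := c.val) (r := r')
  have hfar : 2 ≤ G.dist c.val x := by omega
  obtain ⟨c', hc', hadj, hstep, hsplit⟩ :=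
    exists_step_of_p3Witness hiso hS (x := ⟨x, hx⟩) hc hfar
  exact ⟨c', hc', Or.inr hadj,
    potential_le_potential_of_step hG hx hadj hstep hsplit hr' hneg (by omega)⟩

/-- guarding an isometric induced subgraph satisfying (P3): the cop can
keep the potential `f` from decreasing, unless the robber steps next to the cop. -/
theorem cop_maintains_potential {V : Type} [Fintype V] (G : SimpleGraph V)
    (hG : G.Connected) (B : Set V) (hBconn : (G.induce B).Connected)
    (hiso : ∀ u v : B, (G.induce B).dist u v = G.dist u.val v.val)
    (S : Set ↥B) (hS : P3Witness (G.induce B) S)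
    (f : ↥B → V → ℤ)
    (hf : ∀ (c : ↥B) (r : V),
      f c r = sInf {z : ℤ | ∃ x ∈ B, z = (G.dist r x : ℤ) - (G.dist c.val x : ℤ)}) :
    ∀ c ∈ S, ∀ r : V, f c r < 0 → ∀ r' : V, (r' = r ∨ G.Adj r r') →
      r' ∈ cNbr G c.val ∨
      ∃ c' ∈ S, (c'.val = c.val ∨ G.Adj c.val c'.val) ∧ f c r ≤ f c' r' :=
  cop_maintains_potential_general G hG B hiso S hS f hf
end
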